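/- Let G be a finite simple graph with vertex set V, let d and m be positive integers, let f_1, …, f_d : V → {0, …, m−1} be functions, let D be a natural number and φ : ℕ → ℕ a function. Suppose (i) for every vertex v ∈ V and every i ∈ {1, …, d}, v has at least D neighbours u in G with f_i(u) = f_i(v), and (ii) for every nonempty S ⊆ V there exists i ∈ {1, …, d} such that the image f_i(S) has at least φ(|S|) elements. Then every nonempty S ⊆ V satisfies |N_ext(S)| ≥ φ(|S|)·D − |S|; in particular, if moreover φ(|S|)·D ≥ 2·|S|, then S is a (φ(|S|)·D/(2·|S|))-expanding set. -/

import Mathlib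

/-!
Take a direction `i` in which `S` meets at least `φ(|S|)` strips. The same-strip neighbours of
the vertices of `S` have at least `D` vertices in each of these strips, and they all lie in
`N_ext(S) ∪ S`; hence `φ(|S|)·D ≤ |N_ext(S)| + |S|`. The expansion claim follows from this
bound and `2|S| ≤ φ(|S|)·D`.
-/

open Finset

namespace Finset

variable {ι α β : Type*} [DecidableEq α] [DecidableEq β]

theorem mul_card_image_le_card_biUnion {S : Finset ι} {g : ι → β} {h : α → β}
    {A : ι → Finset α} {D : ℕ} (hA : ∀ v ∈ S, ∀ u ∈ A v, h u = g v)
    (hD : ∀ v ∈ S, D ≤ #(A v)) : D * #(S.image g) ≤ #(S.biUnion A) := by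
  refine mul_card_image_le_card_of_maps_to (f := h) ?_ D ?_
  · intro u hu
    obtain ⟨v, hv, huv⟩ := mem_biUnion.mp hu
    exact mem_image.mpr ⟨v, hv, (hA v hv u huv).symm⟩
  · intro b hb
    obtain ⟨v, hv, rfl⟩ := mem_image.mp hb
    refine (hD v hv).trans (card_le_card fun u hu => ?_)
    exact mem_filter.mpr ⟨mem_biUnion.mpr ⟨v, hv, hu⟩, hA v hv u hu⟩

end Finset

namespace SimpleGraph

variable {V : Type*} [Fintype V] [DecidableEq V] (G : SimpleGraph V) [DecidableRel G.Adj]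

def extNeighborFinset (S : Finset V) : Finset V :=
  univ.filter fun u => u ∉ S ∧ ∃ v ∈ S, G.Adj u v

theorem biUnion_neighborFinset_subset (S : Finset V) :
    (S.biUnion fun v => G.neighborFinset v) ⊆ G.extNeighborFinset S ∪ S := by
  intro u hu
  obtain ⟨v, hv, hvu⟩ := mem_biUnion.mp hu
  by_cases huS : u ∈ S
  · exact mem_union_right _ huS
  · exact mem_union_left _ <|
      mem_filter.mpr ⟨mem_univ u, huS, v, hv, ((mem_neighborFinset G v u).mp hvu).symm⟩

theorem card_image_mul_le_card_extNeighborFinset_add_card {β : Type*} [DecidableEq β]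
    (g : V → β) {D : ℕ} (hD : ∀ v, D ≤ #{u ∈ G.neighborFinset v | g u = g v})
    (S : Finset V) : #(S.image g) * D ≤ #(G.extNeighborFinset S) + #S := by
  let A v := {u ∈ G.neighborFinset v | g u = g v}
  have hA_sub : S.biUnion A ⊆ G.extNeighborFinset S ∪ S :=
    (biUnion_mono fun v _ => filter_subset _ _).trans (G.biUnion_neighborFinset_subset S)
  calc #(S.image g) * D = D * #(S.image g) := mul_comm _ _
    _ ≤ #(S.biUnion A) :=
      mul_card_image_le_card_biUnion (fun v _ u hu => (mem_filter.mp hu).2) fun v _ => hD v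
    _ ≤ #(G.extNeighborFinset S ∪ S) := card_le_card hA_sub
    _ ≤ #(G.extNeighborFinset S) + #S := card_union_le _ _

end SimpleGraph

theorem expander_skeleton_general {V : Type*} [Fintype V] [DecidableEq V]
    (G : SimpleGraph V) [DecidableRel G.Adj]
    (d m : ℕ)
    (f : Fin d → V → Fin m) (D : ℕ) (φ : ℕ → ℕ)
    (h1 : ∀ v : V, ∀ i : Fin d,
      D ≤ ((G.neighborFinset v).filter (fun u => f i u = f i v)).card)
    (h2 : ∀ S : Finset V, S.Nonempty → ∃ i : Fin d, φ S.card ≤ (S.image (f i)).card) :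
    ∀ S : Finset V, S.Nonempty →
      ((φ S.card : ℤ) * D - S.card ≤
        ((Finset.univ.filter (fun u => u ∉ S ∧ ∃ v ∈ S, G.Adj u v)).card : ℤ)) ∧
      (2 * S.card ≤ φ S.card * D →
        ((φ S.card * D : ℝ) / (2 * S.card)) * S.card ≤
          ((Finset.univ.filter (fun u => u ∉ S ∧ ∃ v ∈ S, G.Adj u v)).card : ℝ)) := by
  intro S hS
  change _ ≤ (#(G.extNeighborFinset S) : ℤ) ∧ (_ → _ ≤ (#(G.extNeighborFinset S) : ℝ))
  obtain ⟨i, hi⟩ := h2 S hS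
  have phi_mul_le : φ #S * D ≤ #(G.extNeighborFinset S) + #S :=
    (Nat.mul_le_mul_right D hi).trans
      (G.card_image_mul_le_card_extNeighborFinset_add_card (f i) (fun v => h1 v i) S)
  refine ⟨by omega, fun h2S => ?_⟩
  have hS_pos : (0 : ℝ) < #S := by exact_mod_cast hS.card_pos
  have phi_mul_le' : (φ #S * D : ℝ) ≤ #(G.extNeighborFinset S) + #S := by exact_mod_cast phi_mul_le
  have h2S' : (2 * #S : ℝ) ≤ φ #S * D := by exact_mod_cast h2S
  have half_le : (φ #S * D : ℝ) ≤ 2 * #(G.extNeighborFinset S) := by linarith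
  rw [div_mul_eq_mul_div, div_le_iff₀ (by positivity)]
  calc (φ #S * D : ℝ) * #S ≤ 2 * #(G.extNeighborFinset S) * #S :=
        mul_le_mul_of_nonneg_right half_le hS_pos.le
    _ = _ := by ring

/-- Deterministic skeleton of the main theorem: if every vertex has at least `D`
same-strip neighbours in each of the `d` coordinate directions, and every nonempty
vertex set `S` spreads over at least `φ(|S|)` strips in some direction, then every
nonempty `S` satisfies `|N_ext(S)| ≥ φ(|S|)·D − |S|`; in particular, when
`φ(|S|)·D ≥ 2·|S|`, the set `S` is `(φ(|S|)·D/(2·|S|))`-expanding. -/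
theorem expander_skeleton {V : Type*} [Fintype V] [DecidableEq V]
    (G : SimpleGraph V) [DecidableRel G.Adj]
    (d m : ℕ) (hd : 0 < d) (hm : 0 < m)
    (f : Fin d → V → Fin m) (D : ℕ) (φ : ℕ → ℕ)
    (h1 : ∀ v : V, ∀ i : Fin d,
      D ≤ ((G.neighborFinset v).filter (fun u => f i u = f i v)).card)
    (h2 : ∀ S : Finset V, S.Nonempty → ∃ i : Fin d, φ S.card ≤ (S.image (f i)).card) :
    ∀ S : Finset V, S.Nonempty →
      ((φ S.card : ℤ) * D - S.card ≤
        ((Finset.univ.filter (fun u => u ∉ S ∧ ∃ v ∈ S, G.Adj u v)).card : ℤ)) ∧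
      (2 * S.card ≤ φ S.card * D →
        ((φ S.card * D : ℝ) / (2 * S.card)) * S.card ≤
          ((Finset.univ.filter (fun u => u ∉ S ∧ ∃ v ∈ S, G.Adj u v)).card : ℝ)) :=
  expander_skeleton_general G d m f D φ h1 h2
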